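/- arXiv:1903.06975 — 2 statements merged into one kernel-verified Lean document; each statement's English description precedes it below -/
import Mathlib

section
/- For any ideal I of a commutative ring A, the real radical √[R]{I} equals the intersection of all real prime ideals of A containing I (where this intersection is understood to be A itself if no real prime ideal contains I). -/
/-- An ideal `J` of a commutative ring is *real* if whenever a finite sum of squares
`∑ i, a i ^ 2` lies in `J`, each `a i` lies in `J`. -/
def IsRealIdeal {A : Type*} [CommRing A] (J : Ideal A) : Prop :=
  ∀ (n : ℕ) (a : Fin n → A), (∑ i, a i ^ 2) ∈ J → ∀ i, a i ∈ J

/-- The real Zariski spectrum: the set of real prime ideals of `A`. -/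
structure RealSpectrum (A : Type*) [CommRing A] where
  asIdeal : Ideal A
  isPrime : asIdeal.IsPrime
  isReal : IsRealIdeal asIdeal

namespace RealSpectrum

variable {A : Type*} [CommRing A]

instance (p : RealSpectrum A) : p.asIdeal.IsPrime := p.isPrime

/-- `V(I)`: the set of real prime ideals containing `I`. -/
def zeroLocus (I : Ideal A) : Set (RealSpectrum A) := {p | I ≤ p.asIdeal}

/-- `D(f)`: the set of real prime ideals not containing `f`. -/
def basicOpen (f : A) : Set (RealSpectrum A) := {p | f ∉ p.asIdeal}

end RealSpectrum

/-- The real radical of an ideal `I`: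
`√[R]{I} = { a : ∃ m n (b : Fin n → A), a ^ (2 * m) + ∑ i, b i ^ 2 ∈ I }`. -/
def realRadical {A : Type*} [CommRing A] (I : Ideal A) : Set A :=
  {a | ∃ (m n : ℕ) (b : Fin n → A), a ^ (2 * m) + ∑ i, b i ^ 2 ∈ I}

/-!
If `a ∉ √[R]{I}`, the elements `a ^ (2 * m) + s` with `s` a sum of squares form a multiplicative
set `S` avoiding `I`, and by Zorn there is an ideal `P ⊇ I` maximal among those avoiding `S`.
Such a `P` is prime, as for the ordinary radical. It is also real, because `S` is stable under
adding sums of squares: if `x * x + s ∈ P` with `x ∉ P`, then `P + (x)` meets `S` in some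
`u = p + r * x`, and `u * u + (r * r) * s ≡ r * r * (x * x + s) ≡ 0` modulo `P` is an element
of `S` lying in `P`. Since `a * a ∈ S`, `a ∉ P`.
-/

theorem isSumSq_iff_exists_fin_sum_sq {R : Type*} [CommSemiring R] {s : R} :
    IsSumSq s ↔ ∃ (n : ℕ) (b : Fin n → R), s = ∑ i, b i ^ 2 := by
  refine ⟨fun hs => ?_, fun ⟨n, b, hs⟩ => hs ▸ IsSumSq.sum_sq _ b⟩
  induction hs with
  | zero => exact ⟨0, ![], by simp⟩
  | sq_add a _ ih =>
    obtain ⟨n, b, rfl⟩ := ih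
    exact ⟨n + 1, Fin.cons a b, by simp [Fin.sum_univ_succ, sq]⟩

section

variable {A : Type*} [CommRing A]

theorem isRealIdeal_iff_mul_self_add_mem {J : Ideal A} :
    IsRealIdeal J ↔ ∀ x s, IsSumSq s → x * x + s ∈ J → x ∈ J := by
  constructor
  · intro hJ x s hs hmem
    obtain ⟨n, b, rfl⟩ := isSumSq_iff_exists_fin_sum_sq.1 hs
    refine hJ (n + 1) (Fin.cons x b) ?_ 0
    simpa [Fin.sum_univ_succ, sq] using hmem
  · intro hJ n c hsum j
    refine hJ (c j) _ (IsSumSq.sum_sq (Finset.univ.erase j) c) ?_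
    rwa [← sq, Finset.add_sum_erase _ (fun i => c i ^ 2) (Finset.mem_univ j)]

theorem mem_realRadical_iff {I : Ideal A} {a : A} :
    a ∈ realRadical I ↔ ∃ (m : ℕ) (s : A), IsSumSq s ∧ a ^ (2 * m) + s ∈ I := by
  simp only [realRadical, Set.mem_ofPred_eq, isSumSq_iff_exists_fin_sum_sq]
  constructor
  · rintro ⟨m, n, b, h⟩
    exact ⟨m, _, ⟨n, b, rfl⟩, h⟩
  · rintro ⟨m, _, ⟨n, b, rfl⟩, h⟩
    exact ⟨m, n, b, h⟩

theorem Ideal.exists_le_maximal_disjoint (I : Ideal A) (S : Set A)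
    (disjoint : Disjoint (I : Set A) S) :
    ∃ P : Ideal A, I ≤ P ∧ Maximal (fun J : Ideal A => Disjoint (J : Set A) S) P := by
  refine zorn_le_nonempty₀ {J : Ideal A | Disjoint (J : Set A) S} (fun c hc hchain J hJ => ?_)
    I disjoint
  refine ⟨sSup c, Set.disjoint_left.2 fun x hx => ?_, fun _ => le_sSup⟩
  obtain ⟨K, hKc, hxK⟩ := (Submodule.mem_sSup_of_directed ⟨J, hJ⟩ hchain.directedOn).1 hx
  exact Set.disjoint_left.1 (hc hKc) hxK

theorem isRealIdeal_of_maximally_disjoint (P : Ideal A) (S : Submonoid A)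
    (add_mem : ∀ x ∈ S, ∀ s, IsSumSq s → x + s ∈ S)
    (disjoint : Disjoint (P : Set A) S)
    (maximally_disjoint : ∀ J : Ideal A, P < J → ¬Disjoint (J : Set A) S) :
    IsRealIdeal P := by
  refine isRealIdeal_iff_mul_self_add_mem.2 fun x s hs hmem => ?_
  by_contra hx
  have hmeet := maximally_disjoint _ (Submodule.lt_sup_iff_notMem.2 hx)
  simp only [Set.not_disjoint_iff, SetLike.mem_coe, Submodule.mem_sup,
    Ideal.mem_span_singleton] at hmeet
  obtain ⟨_, ⟨p, hp, _, ⟨r, rfl⟩, rfl⟩, huS⟩ := hmeet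
  have hP : (p + x * r) * (p + x * r) + r * r * s ∈ P := by
    have h : (p + x * r) * (p + x * r) + r * r * s
        = p * (p + 2 * x * r) + r * r * (x * x + s) := by ring
    rw [h]
    exact P.add_mem (P.mul_mem_right _ hp) (P.mul_mem_left _ hmem)
  exact Set.disjoint_left.1 disjoint hP
    (add_mem _ (S.mul_mem huS huS) _ ((IsSumSq.mul_self r).mul hs))

def evenPowAddSumSq (a : A) : Submonoid A where
  carrier := {x | ∃ (m : ℕ) (s : A), IsSumSq s ∧ x = a ^ (2 * m) + s}
  one_mem' := ⟨0, 0, .zero, by simp⟩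
  mul_mem' := by
    rintro _ _ ⟨m, s, hs, rfl⟩ ⟨m', s', hs', rfl⟩
    have hpow (k : ℕ) : a ^ (2 * k) = a ^ k * a ^ k := by ring
    refine ⟨m + m', a ^ (2 * m) * s' + a ^ (2 * m') * s + s * s', ?_, by ring⟩
    rw [hpow m, hpow m']
    exact (((IsSumSq.mul_self _).mul hs').add ((IsSumSq.mul_self _).mul hs)).add (hs.mul hs')

theorem add_mem_evenPowAddSumSq {a x s : A} (hx : x ∈ evenPowAddSumSq a) (hs : IsSumSq s) :
    x + s ∈ evenPowAddSumSq a := by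
  obtain ⟨m, t, ht, rfl⟩ := hx
  exact ⟨m, t + s, ht.add hs, by ring⟩

theorem mul_self_mem_evenPowAddSumSq (a : A) : a * a ∈ evenPowAddSumSq a :=
  ⟨1, 0, .zero, by ring⟩

theorem disjoint_evenPowAddSumSq_iff {I : Ideal A} {a : A} :
    Disjoint (I : Set A) (evenPowAddSumSq a) ↔ a ∉ realRadical I := by
  simp only [mem_realRadical_iff, Set.disjoint_right, SetLike.mem_coe, evenPowAddSumSq,
    Submonoid.coe_set_mk, Subsemigroup.coe_set_mk, Set.mem_ofPred_eq]
  constructor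
  · rintro h ⟨m, s, hs, hI⟩
    exact h ⟨m, s, hs, rfl⟩ hI
  · rintro h _ ⟨m, s, hs, rfl⟩ hI
    exact h ⟨m, s, hs, hI⟩

namespace RealSpectrum

theorem realRadical_subset {I : Ideal A} {p : RealSpectrum A} (hp : p ∈ zeroLocus I) :
    realRadical I ⊆ p.asIdeal := by
  intro a ha
  obtain ⟨m, s, hs, hI⟩ := mem_realRadical_iff.1 ha
  have ham : a ^ m * a ^ m + s ∈ p.asIdeal := by
    rw [← pow_add, ← two_mul]
    exact hp hI
  exact p.isPrime.mem_of_pow_mem m (isRealIdeal_iff_mul_self_add_mem.1 p.isReal _ s hs ham)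

theorem exists_mem_zeroLocus_notMem {I : Ideal A} {a : A} (ha : a ∉ realRadical I) :
    ∃ p ∈ zeroLocus I, a ∉ p.asIdeal := by
  obtain ⟨P, hIP, hP⟩ :=
    I.exists_le_maximal_disjoint _ (disjoint_evenPowAddSumSq_iff.2 ha)
  have maximally_disjoint (J : Ideal A) (hJ : P < J) := hP.not_prop_of_gt hJ
  refine ⟨⟨P, Ideal.isPrime_of_maximally_disjoint P _ hP.1 maximally_disjoint,
    isRealIdeal_of_maximally_disjoint P _ (fun _ hx _ hs => add_mem_evenPowAddSumSq hx hs)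
      hP.1 maximally_disjoint⟩, hIP, fun haP => ?_⟩
  exact Set.disjoint_left.1 hP.1 (P.mul_mem_left a haP) (mul_self_mem_evenPowAddSumSq a)

end RealSpectrum

end

open RealSpectrum in
/-- The real radical of `I` is the intersection of all real prime ideals containing `I`
(the empty intersection being `A` itself). -/
theorem realRadical_eq_iInter {A : Type*} [CommRing A] (I : Ideal A) :
    realRadical I = ⋂ p ∈ zeroLocus I, ((RealSpectrum.asIdeal p : Ideal A) : Set A) := by
  refine subset_antisymm (Set.subset_iInter₂ fun p hp => realRadical_subset hp) fun a ha => ?_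
  by_contra haI
  obtain ⟨p, hp, hap⟩ := exists_mem_zeroLocus_notMem haI
  exact hap (Set.mem_iInter₂.1 ha p hp)
end

section
/- Let A be a real ring and X its real Zariski spectrum. Then the ring of abstract real regular functions on the whole space X is isomorphic to Σ_1^{-1}A, the localization of A at the multiplicative set Σ_1 = { 1 + Σ_{i=1}^n a_i² : a_i ∈ A, n ∈ ℕ ∪ {0} }, via the canonical map sending a/(1 + Σ x²) to the function p ↦ a/(1 + Σ x²) ∈ A_p. -/
/-- A commutative ring is *real* if a finite sum of squares vanishes only when
each of the summands' base elements vanishes. -/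
def IsRealRing (A : Type*) [CommRing A] : Prop :=
  ∀ (n : ℕ) (a : Fin n → A), (∑ i, a i ^ 2) = 0 → ∀ i, a i = 0

namespace RealSpectrum

variable {A : Type*} [CommRing A]

/-- The real Zariski topology, whose closed sets are exactly the sets `zeroLocus I`. -/
instance zariskiTopology : TopologicalSpace (RealSpectrum A) :=
  TopologicalSpace.ofClosed {s | ∃ I : Ideal A, s = zeroLocus I}
    ⟨⊤, by
      ext p
      simp only [Set.mem_empty_iff_false, zeroLocus, Set.mem_setOf_eq, false_iff]
      exact fun h => p.isPrime.ne_top (top_le_iff.mp h)⟩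
    (fun F hF => ⟨sSup {I : Ideal A | zeroLocus I ∈ F}, by
      ext p
      simp only [Set.mem_sInter, zeroLocus, Set.mem_setOf_eq, sSup_le_iff]
      constructor
      · intro h I hI
        exact h (zeroLocus I) hI
      · intro h s hs
        obtain ⟨I, rfl⟩ := hF hs
        exact h I hs⟩)
    (by
      rintro _ ⟨I, rfl⟩ _ ⟨J, rfl⟩
      refine ⟨I * J, ?_⟩
      ext p
      simp only [Set.mem_union, zeroLocus, Set.mem_setOf_eq, p.isPrime.mul_le])

theorem isClosed_iff (s : Set (RealSpectrum A)) :
    IsClosed s ↔ ∃ I : Ideal A, s = zeroLocus I := by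
  rw [← isOpen_compl_iff]
  change sᶜᶜ ∈ _ ↔ _
  rw [compl_compl]
  rfl

theorem basicOpen_eq_compl (f : A) :
    basicOpen f = (zeroLocus (Ideal.span {f}))ᶜ := by
  ext p
  simp [basicOpen, zeroLocus, Ideal.span_le, Set.singleton_subset_iff]

theorem isOpen_basicOpen (f : A) : IsOpen (basicOpen f) := by
  rw [basicOpen_eq_compl, isOpen_compl_iff, isClosed_iff]
  exact ⟨_, rfl⟩

end RealSpectrum

/-- The set of finite sums of squares in `A`. -/
def SumSq (A : Type*) [CommRing A] : Set A :=
  {x | ∃ (n : ℕ) (c : Fin n → A), x = ∑ i, c i ^ 2}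

theorem SumSq.zero {A : Type*} [CommRing A] : (0 : A) ∈ SumSq A := ⟨0, fun i => 0, by simp⟩

theorem SumSq.sq {A : Type*} [CommRing A] (a : A) : a ^ 2 ∈ SumSq A := ⟨1, fun _ => a, by simp⟩

theorem SumSq.add {A : Type*} [CommRing A] {x y : A} (hx : x ∈ SumSq A) (hy : y ∈ SumSq A) :
    x + y ∈ SumSq A := by
  obtain ⟨n, c, rfl⟩ := hx
  obtain ⟨m, d, rfl⟩ := hy
  exact ⟨n + m, Fin.append c d, by
    simp [Fin.sum_univ_add, Fin.append_left, Fin.append_right]⟩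

theorem SumSq.mul {A : Type*} [CommRing A] {x y : A} (hx : x ∈ SumSq A) (hy : y ∈ SumSq A) :
    x * y ∈ SumSq A := by
  obtain ⟨n, c, rfl⟩ := hx
  obtain ⟨m, d, rfl⟩ := hy
  refine ⟨n * m, fun k => c (finProdFinEquiv.symm k).1 * d (finProdFinEquiv.symm k).2, ?_⟩
  rw [Finset.sum_mul_sum]
  rw [show ∑ i : Fin (n * m),
      (fun k => c (finProdFinEquiv.symm k).1 * d (finProdFinEquiv.symm k).2) i ^ 2
      = ∑ q : Fin n × Fin m, (c q.1 * d q.2) ^ 2 from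
    Equiv.sum_comp finProdFinEquiv.symm (fun q : Fin n × Fin m => (c q.1 * d q.2) ^ 2)]
  simp [Fintype.sum_prod_type, mul_pow]

namespace RealSpectrum

variable {A : Type*} [CommRing A]

/-- The multiplicative set `Σ_f = { f ^ (2 * m) + ∑ i, a i ^ 2 }`. -/
def sigmaMonoid (f : A) : Submonoid A where
  carrier := {x | ∃ (m : ℕ), ∃ s ∈ SumSq A, x = f ^ (2 * m) + s}
  one_mem' := ⟨0, 0, SumSq.zero, by simp⟩
  mul_mem' := by
    rintro x y ⟨m, s, hs, rfl⟩ ⟨m', t, ht, rfl⟩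
    refine ⟨m + m', f ^ (2 * m) * t + f ^ (2 * m') * s + s * t, ?_, by ring⟩
    have h1 : f ^ (2 * m) ∈ SumSq A := by
      have := SumSq.sq (f ^ m); rwa [← pow_mul, mul_comm m 2] at this
    have h2 : f ^ (2 * m') ∈ SumSq A := by
      have := SumSq.sq (f ^ m'); rwa [← pow_mul, mul_comm m' 2] at this
    exact SumSq.add (SumSq.add (SumSq.mul h1 ht) (SumSq.mul h2 hs)) (SumSq.mul hs ht)

theorem mem_sigmaMonoid_iff (f x : A) :
    x ∈ sigmaMonoid f ↔ ∃ (m n : ℕ) (c : Fin n → A), x = f ^ (2 * m) + ∑ i, c i ^ 2 := by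
  constructor
  · rintro ⟨m, s, ⟨n, c, rfl⟩, rfl⟩
    exact ⟨m, n, c, rfl⟩
  · rintro ⟨m, n, c, rfl⟩
    exact ⟨m, _, ⟨n, c, rfl⟩, rfl⟩

/-- The multiplicative set `Σ_1 = { 1 + ∑ i, a i ^ 2 }`. -/
def sigma1 (A : Type*) [CommRing A] : Submonoid A where
  carrier := {x | ∃ s ∈ SumSq A, x = 1 + s}
  one_mem' := ⟨0, SumSq.zero, by simp⟩
  mul_mem' := by
    rintro x y ⟨s, hs, rfl⟩ ⟨t, ht, rfl⟩
    exact ⟨s + t + s * t, SumSq.add (SumSq.add hs ht) (SumSq.mul hs ht), by ring⟩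

theorem mem_sigma1_iff (x : A) :
    x ∈ sigma1 A ↔ ∃ (n : ℕ) (c : Fin n → A), x = 1 + ∑ i, c i ^ 2 := by
  constructor
  · rintro ⟨s, ⟨n, c, rfl⟩, rfl⟩
    exact ⟨n, c, rfl⟩
  · rintro ⟨n, c, rfl⟩
    exact ⟨_, ⟨n, c, rfl⟩, rfl⟩

end RealSpectrum

namespace RealSpectrum

variable {A : Type*} [CommRing A]

/-- An *abstract real regular function* on `U ⊆ RealSpectrum A`: a dependent function `s`
assigning to each `p ∈ U` an element of the localization `A_p`, such that around every
point of `U` it is given by a single fraction `a / g` with `g` outside all the primes of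
the neighborhood. -/
def IsLocallyFraction {U : Set (RealSpectrum A)}
    (s : ∀ p : U, Localization.AtPrime (p : RealSpectrum A).asIdeal) : Prop :=
  ∀ p : U, ∃ V : Set (RealSpectrum A), IsOpen V ∧ (p : RealSpectrum A) ∈ V ∧ V ⊆ U ∧
    ∃ a g : A, ∀ q : U, (q : RealSpectrum A) ∈ V →
      ∃ hg : g ∉ (q : RealSpectrum A).asIdeal,
        s q = IsLocalization.mk' (Localization.AtPrime (q : RealSpectrum A).asIdeal) a
          (⟨g, hg⟩ : (q : RealSpectrum A).asIdeal.primeCompl)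

end RealSpectrum

namespace RealSpectrum

variable {A : Type*} [CommRing A]

/-- The ring `O_X(U)` of abstract real regular functions on an open set `U`, as a
subring of the product of the localizations `A_p`, with pointwise operations. -/
def regularFunctions (U : Set (RealSpectrum A)) (hU : IsOpen U) :
    Subring (∀ p : U, Localization.AtPrime (p : RealSpectrum A).asIdeal) where
  carrier := {s | IsLocallyFraction s}
  zero_mem' := fun p => ⟨U, hU, p.2, le_refl U, 0, 1, fun q _ =>
    ⟨fun h1 => (q : RealSpectrum A).isPrime.ne_top ((Ideal.eq_top_iff_one _).mpr h1), by
      simp [IsLocalization.mk'_zero]⟩⟩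
  one_mem' := fun p => ⟨U, hU, p.2, le_refl U, 1, 1, fun q _ =>
    ⟨fun h1 => (q : RealSpectrum A).isPrime.ne_top ((Ideal.eq_top_iff_one _).mpr h1), by
      have : (⟨1, _⟩ : (q : RealSpectrum A).asIdeal.primeCompl) = 1 := rfl
      rw [this, IsLocalization.mk'_one]
      simp⟩⟩
  add_mem' := by
    rintro s t hs ht p
    obtain ⟨V₁, hV₁, hpV₁, hV₁U, a₁, g₁, h₁⟩ := hs p
    obtain ⟨V₂, hV₂, hpV₂, hV₂U, a₂, g₂, h₂⟩ := ht p
    refine ⟨V₁ ∩ V₂, hV₁.inter hV₂, ⟨hpV₁, hpV₂⟩, fun x hx => hV₁U hx.1,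
      a₁ * g₂ + a₂ * g₁, g₁ * g₂, fun q hq => ?_⟩
    obtain ⟨hg₁, e₁⟩ := h₁ q hq.1
    obtain ⟨hg₂, e₂⟩ := h₂ q hq.2
    refine ⟨fun hmem => ((q : RealSpectrum A).isPrime.mem_or_mem hmem).elim hg₁ hg₂, ?_⟩
    have : (⟨g₁ * g₂, _⟩ : (q : RealSpectrum A).asIdeal.primeCompl)
        = ⟨g₁, hg₁⟩ * ⟨g₂, hg₂⟩ := rfl
    rw [Pi.add_apply, e₁, e₂, this]
    exact (IsLocalization.mk'_add a₁ a₂ ⟨g₁, hg₁⟩ ⟨g₂, hg₂⟩).symm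
  neg_mem' := by
    rintro s hs p
    obtain ⟨V, hV, hpV, hVU, a, g, h⟩ := hs p
    refine ⟨V, hV, hpV, hVU, -a, g, fun q hq => ?_⟩
    obtain ⟨hg, e⟩ := h q hq
    refine ⟨hg, ?_⟩
    rw [Pi.neg_apply, e, IsLocalization.mk'_eq_mul_mk'_one,
      IsLocalization.mk'_eq_mul_mk'_one (-a), map_neg, neg_mul]
  mul_mem' := by
    rintro s t hs ht p
    obtain ⟨V₁, hV₁, hpV₁, hV₁U, a₁, g₁, h₁⟩ := hs p
    obtain ⟨V₂, hV₂, hpV₂, hV₂U, a₂, g₂, h₂⟩ := ht p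
    refine ⟨V₁ ∩ V₂, hV₁.inter hV₂, ⟨hpV₁, hpV₂⟩, fun x hx => hV₁U hx.1,
      a₁ * a₂, g₁ * g₂, fun q hq => ?_⟩
    obtain ⟨hg₁, e₁⟩ := h₁ q hq.1
    obtain ⟨hg₂, e₂⟩ := h₂ q hq.2
    refine ⟨fun hmem => ((q : RealSpectrum A).isPrime.mem_or_mem hmem).elim hg₁ hg₂, ?_⟩
    have : (⟨g₁ * g₂, _⟩ : (q : RealSpectrum A).asIdeal.primeCompl)
        = ⟨g₁, hg₁⟩ * ⟨g₂, hg₂⟩ := rfl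
    rw [Pi.mul_apply, e₁, e₂, this, IsLocalization.mk'_mul]

end RealSpectrum

/-!
Elements of `Σ₁` avoid every real prime, so `a / σ ↦ (p ↦ a / σ)` defines `Σ₁⁻¹A → O_X(X)`.
In a real ring an element `x` lying in every real prime is zero: otherwise `0` is not of the form
`x ^ (2m) + ∑ aᵢ²`, and Zorn's lemma yields a real prime avoiding all such elements, in particular
`x²`. This gives injectivity. For surjectivity, write a global section as `wₚ / kₚ` on a basic
open `D(kₚ) ∋ p`. The cross terms `kₚ k_q (wₚ k_q - w_q kₚ)` lie in every real prime, hence vanish;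
and as no real prime contains all the `kₚ²`, some `τ = ∑ cₚ kₚ²` lies in `Σ₁`. The section is
then `(∑ cₚ wₚ kₚ) / τ`.
-/

theorem SumSq.sum_sq_mem {A ι : Type*} [CommRing A] (s : Finset ι) (f : ι → A) :
    (∑ i ∈ s, f i ^ 2) ∈ SumSq A := by
  classical
  induction s using Finset.induction_on with
  | empty => simpa using SumSq.zero
  | insert i s hi ih => rw [Finset.sum_insert hi]; exact SumSq.add (SumSq.sq _) ih

theorem Finsupp.sum_mul_sq_eq_of_mul_mul_sub_eq_zero {A ι : Type*} [CommRing A] (c : ι →₀ A)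
    {w k : ι → A}
    (h : ∀ i j, k i * k j * (w i * k j - w j * k i) = 0) (j : ι) :
    (c.sum fun i a => a * (w i * k i)) * k j ^ 2 = w j * k j * c.sum fun i a => a * k i ^ 2 := by
  rw [Finsupp.sum_mul, Finsupp.mul_sum]
  exact Finsupp.sum_congr fun i _ => by linear_combination c i * h i j

section RealIdeal

variable {A : Type*} [CommRing A]

theorem IsRealIdeal.mem_of_sq_add_mem {J : Ideal A} (hJ : IsRealIdeal J) {a s : A}
    (hs : s ∈ SumSq A) (h : a ^ 2 + s ∈ J) : a ∈ J := by
  obtain ⟨n, c, rfl⟩ := hs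
  have hsum : (∑ i, (Fin.cons a c : Fin (n + 1) → A) i ^ 2) ∈ J := by
    simpa [Fin.sum_univ_succ] using h
  simpa using hJ _ _ hsum 0

theorem IsRealRing.isRealIdeal_bot (hA : IsRealRing A) : IsRealIdeal (⊥ : Ideal A) :=
  fun n a h i => Ideal.mem_bot.mpr (hA n a (Ideal.mem_bot.mp h) i)

theorem IsRealRing.isReduced (hA : IsRealRing A) : IsReduced A :=
  (isReduced_iff_pow_one_lt 2 one_lt_two).2 fun x hx => by
    simpa using hA.isRealIdeal_bot.mem_of_sq_add_mem SumSq.zero (by simpa using hx)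

theorem isRealIdeal_of_maximally_disjoint_s14 (S : Submonoid A)
    (hS : ∀ u ∈ S, ∀ s ∈ SumSq A, u + s ∈ S) (J : Ideal A) (hJ : Disjoint (J : Set A) S)
    (hmax : ∀ J' : Ideal A, J < J' → ¬ Disjoint (J' : Set A) S) : IsRealIdeal J := by
  intro n b hsum i
  by_contra hbi
  obtain ⟨u, hu, huS⟩ := Set.not_disjoint_iff.mp
    (hmax _ (Submodule.lt_sup_iff_notMem.mpr hbi))
  obtain ⟨j, hj, _, ht, rfl⟩ := Submodule.mem_sup.mp hu
  obtain ⟨t, rfl⟩ := Ideal.mem_span_singleton'.mp ht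
  set σ := ∑ l ∈ Finset.univ.erase i, (t * b l) ^ 2
  have hσ : (t * b i) ^ 2 + σ = t ^ 2 * ∑ l, b l ^ 2 := by
    rw [Finset.add_sum_erase _ (fun l => (t * b l) ^ 2) (Finset.mem_univ i), Finset.mul_sum]
    simp only [mul_pow]
  -- `(j + t bᵢ)² + σ` lies in `S`, and in `J` since `∑ bₗ² ∈ J`
  have hmem : (j + t * b i) ^ 2 + σ ∈ J := by
    have e : (j + t * b i) ^ 2 + σ = j * (j + 2 * (t * b i)) + t ^ 2 * ∑ l, b l ^ 2 := by
      linear_combination hσ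
    rw [e]
    exact J.add_mem (J.mul_mem_right _ hj) (J.mul_mem_left _ hsum)
  exact hJ.ne_of_mem hmem (hS _ (pow_mem huS 2) σ (SumSq.sum_sq_mem _ _)) rfl

end RealIdeal

namespace RealSpectrum

variable {A : Type*} [CommRing A]

theorem exists_le_disjoint (S : Submonoid A) (hS : ∀ u ∈ S, ∀ s ∈ SumSq A, u + s ∈ S)
    {I : Ideal A} (hI : Disjoint (I : Set A) S) :
    ∃ p : RealSpectrum A, I ≤ p.asIdeal ∧ Disjoint (p.asIdeal : Set A) S := by
  obtain ⟨J, hIJ, hJ⟩ := zorn_le_nonempty₀ {J : Ideal A | Disjoint (J : Set A) S}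
    (fun c hc hchain K hK => ⟨sSup c, Set.disjoint_left.mpr fun x hx => by
      obtain ⟨L, hLc, hxL⟩ := (Submodule.mem_sSup_of_directed ⟨K, hK⟩ hchain.directedOn).mp hx
      exact Set.disjoint_left.mp (hc hLc) hxL, fun _ => le_sSup⟩) I hI
  have hmax : ∀ J' : Ideal A, J < J' → ¬ Disjoint (J' : Set A) S := fun _ => hJ.not_prop_of_gt
  exact ⟨⟨J, Ideal.isPrime_of_maximally_disjoint J S hJ.1 hmax,
    isRealIdeal_of_maximally_disjoint_s14 S hS J hJ.1 hmax⟩, hIJ, hJ.1⟩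

theorem add_mem_sigmaMonoid {f u s : A} (hu : u ∈ sigmaMonoid f) (hs : s ∈ SumSq A) :
    u + s ∈ sigmaMonoid f := by
  obtain ⟨m, t, ht, rfl⟩ := hu
  exact ⟨m, t + s, SumSq.add ht hs, add_assoc _ _ _⟩

theorem add_mem_sigma1 {u s : A} (hu : u ∈ sigma1 A) (hs : s ∈ SumSq A) : u + s ∈ sigma1 A := by
  obtain ⟨t, ht, rfl⟩ := hu
  exact ⟨t + s, SumSq.add ht hs, add_assoc _ _ _⟩

theorem sigma1_le_primeCompl (p : RealSpectrum A) : sigma1 A ≤ p.asIdeal.primeCompl := by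
  rintro _ ⟨s, hs, rfl⟩ h
  exact p.asIdeal.one_notMem (p.isReal.mem_of_sq_add_mem hs (by rwa [one_pow]))

theorem eq_zero_of_forall_mem_asIdeal (hA : IsRealRing A) {x : A}
    (h : ∀ p : RealSpectrum A, x ∈ p.asIdeal) : x = 0 := by
  have := hA.isReduced
  by_contra hx
  have hbot : Disjoint ((⊥ : Ideal A) : Set A) (sigmaMonoid x) := by
    refine Set.disjoint_left.mpr fun y hy ⟨m, s, hs, hy'⟩ => hx (IsNilpotent.eq_zero ⟨m, ?_⟩)
    refine (Ideal.mem_bot.mp (hA.isRealIdeal_bot.mem_of_sq_add_mem hs ?_))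
    rw [← pow_mul, mul_comm, ← hy']
    exact hy
  obtain ⟨p, -, hp⟩ := exists_le_disjoint _ (fun _ hu _ => add_mem_sigmaMonoid hu) hbot
  exact hp.ne_of_mem (p.asIdeal.mul_mem_left x (h p)) ⟨1, 0, SumSq.zero, by ring⟩ rfl

theorem exists_finsupp_sum_mul_sq_mem_sigma1 {ι : Type*} (k : ι → A)
    (hk : ∀ p : RealSpectrum A, ∃ i, k i ∉ p.asIdeal) :
    ∃ c : ι →₀ A, (c.sum fun i a => a * k i ^ 2) ∈ sigma1 A := by
  by_contra! hc
  have hdisj : Disjoint ((Ideal.span (Set.range fun i => k i ^ 2) : Ideal A) : Set A)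
      (sigma1 A) := by
    refine Set.disjoint_left.mpr fun τ hτ hτS => ?_
    obtain ⟨c, rfl⟩ := Finsupp.mem_span_range_iff_exists_finsupp.mp hτ
    exact hc c hτS
  obtain ⟨p, hspan, -⟩ := exists_le_disjoint _ (fun _ hu _ => add_mem_sigma1 hu) hdisj
  obtain ⟨i, hi⟩ := hk p
  exact hi (p.isPrime.mem_of_pow_mem 2 (hspan (Ideal.subset_span ⟨i, rfl⟩)))

theorem exists_basicOpen_subset {V : Set (RealSpectrum A)} (hV : IsOpen V) {p : RealSpectrum A}
    (hp : p ∈ V) : ∃ f : A, p ∈ basicOpen f ∧ basicOpen f ⊆ V := by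
  obtain ⟨I, hI⟩ := (isClosed_iff Vᶜ).mp hV.isClosed_compl
  have hpI : ¬ I ≤ p.asIdeal := fun h => (show p ∈ Vᶜ by rw [hI]; exact h) hp
  obtain ⟨f, hfI, hfp⟩ := SetLike.not_le_iff_exists.mp hpI
  refine ⟨f, hfp, fun q hq => ?_⟩
  by_contra hqV
  exact hq ((show q ∈ zeroLocus I by rw [← hI]; exact hqV) hfI)

theorem mem_of_algebraMap_eq_zero (p : RealSpectrum A) {x : A}
    (hx : algebraMap A (Localization.AtPrime p.asIdeal) x = 0) : x ∈ p.asIdeal :=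
  (IsLocalization.AtPrime.to_map_mem_maximal_iff _ p.asIdeal x).mp
    (hx ▸ zero_mem _)

/-- `s` equals `w / k` on `U ∩ D(k)`. -/
def IsFractionOn {U : Set (RealSpectrum A)}
    (s : ∀ p : U, Localization.AtPrime (p : RealSpectrum A).asIdeal) (w k : A) : Prop :=
  ∀ (q : U) (hq : k ∉ (q : RealSpectrum A).asIdeal),
    s q = IsLocalization.mk' _ w (⟨k, hq⟩ : (q : RealSpectrum A).asIdeal.primeCompl)

theorem IsLocallyFraction.exists_isFractionOn {U : Set (RealSpectrum A)}
    {s : ∀ p : U, Localization.AtPrime (p : RealSpectrum A).asIdeal} (hs : IsLocallyFraction s)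
    (p : U) : ∃ w k : A, k ∉ (p : RealSpectrum A).asIdeal ∧ IsFractionOn s w k := by
  obtain ⟨V, hV, hpV, -, a, g, hfrac⟩ := hs p
  obtain ⟨f, hfp, hfV⟩ := exists_basicOpen_subset hV hpV
  obtain ⟨hgp, -⟩ := hfrac p hpV
  refine ⟨a * f, g * f, fun h => (p.1.isPrime.mem_or_mem h).elim hgp hfp, fun q hq => ?_⟩
  have hfq : f ∉ q.1.asIdeal := fun h => hq (q.1.asIdeal.mul_mem_left g h)
  obtain ⟨hgq, hsq⟩ := hfrac q (hfV hfq)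
  rw [hsq]
  exact (IsLocalization.mk'_cancel a ⟨g, hgq⟩ ⟨f, hfq⟩).symm

theorem IsFractionOn.mul_mul_sub_mem {U : Set (RealSpectrum A)}
    {s : ∀ p : U, Localization.AtPrime (p : RealSpectrum A).asIdeal} {w k w' k' : A}
    (h : IsFractionOn s w k) (h' : IsFractionOn s w' k') (q : U) :
    k * k' * (w * k' - w' * k) ∈ (q : RealSpectrum A).asIdeal := by
  by_cases hkk' : k * k' ∈ q.1.asIdeal
  · exact q.1.asIdeal.mul_mem_right _ hkk'
  refine q.1.asIdeal.mul_mem_left _ (q.1.mem_of_algebraMap_eq_zero ?_)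
  have hk : k ∉ q.1.asIdeal := fun hk => hkk' (q.1.asIdeal.mul_mem_right _ hk)
  have hk' : k' ∉ q.1.asIdeal := fun hk' => hkk' (q.1.asIdeal.mul_mem_left _ hk')
  have heq := (h q hk).symm.trans (h' q hk')
  rw [IsLocalization.mk'_eq_iff_eq] at heq
  rw [map_sub, sub_eq_zero, mul_comm w, mul_comm w' k]
  exact heq

noncomputable def toStalk (p : RealSpectrum A) :
    Localization (sigma1 A) →+* Localization.AtPrime p.asIdeal :=
  IsLocalization.map (M := sigma1 A) (T := p.asIdeal.primeCompl) _ (RingHom.id A)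
    (sigma1_le_primeCompl p)

theorem toStalk_mk (p : RealSpectrum A) (a : A) (σ : sigma1 A) :
    toStalk p (Localization.mk a σ) =
      IsLocalization.mk' _ a (⟨σ, sigma1_le_primeCompl p σ.2⟩ : p.asIdeal.primeCompl) := by
  rw [Localization.mk_eq_mk']
  exact IsLocalization.map_mk' _ _ _

noncomputable def toRegularFunctions :
    Localization (sigma1 A) →+* regularFunctions (Set.univ : Set (RealSpectrum A)) isOpen_univ :=
  (RingHom.pi fun p : (Set.univ : Set (RealSpectrum A)) => toStalk p.1).codRestrict _
    fun z => Localization.induction_on z fun ⟨a, σ⟩ _ =>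
      ⟨Set.univ, isOpen_univ, trivial, subset_rfl, a, σ, fun q _ =>
        ⟨sigma1_le_primeCompl q.1 σ.2, toStalk_mk q.1 a σ⟩⟩

theorem toRegularFunctions_mk_apply (a : A) (σ : sigma1 A) (p : (Set.univ : Set (RealSpectrum A)))
    (hσ : (σ : A) ∉ (p : RealSpectrum A).asIdeal) :
    (toRegularFunctions (Localization.mk a σ)).1 p =
      IsLocalization.mk' _ a (⟨σ, hσ⟩ : (p : RealSpectrum A).asIdeal.primeCompl) :=
  toStalk_mk p.1 a σ

theorem toRegularFunctions_injective (hA : IsRealRing A) :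
    Function.Injective (toRegularFunctions (A := A)) := by
  refine (injective_iff_map_eq_zero _).mpr fun z => Localization.induction_on z fun ⟨a, σ⟩ hz => ?_
  suffices a = 0 by rw [this, Localization.mk_zero]
  refine eq_zero_of_forall_mem_asIdeal hA fun p => p.mem_of_algebraMap_eq_zero ?_
  have hp := toRegularFunctions_mk_apply a σ ⟨p, trivial⟩ (sigma1_le_primeCompl p σ.2)
  rw [hz] at hp
  simpa using (IsLocalization.mk'_eq_iff_eq_mul.mp hp.symm)

theorem toRegularFunctions_surjective (hA : IsRealRing A) :
    Function.Surjective (toRegularFunctions (A := A)) := by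
  rintro ⟨s, hs⟩
  choose w k hk hsk using fun p : RealSpectrum A => hs.exists_isFractionOn ⟨p, trivial⟩
  have hcross (i j : RealSpectrum A) : k i * k j * (w i * k j - w j * k i) = 0 :=
    eq_zero_of_forall_mem_asIdeal hA fun q => (hsk i).mul_mul_sub_mem (hsk j) ⟨q, trivial⟩
  obtain ⟨c, hc⟩ := exists_finsupp_sum_mul_sq_mem_sigma1 k (fun p => ⟨p, hk p⟩)
  refine ⟨Localization.mk (c.sum fun i a => a * (w i * k i)) ⟨_, hc⟩,
    Subtype.ext (funext fun P => ?_)⟩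
  change _ = s P
  let kP : P.1.asIdeal.primeCompl := ⟨k P.1, hk P.1⟩
  rw [toRegularFunctions_mk_apply _ _ P (sigma1_le_primeCompl P.1 hc), hsk P.1 P (hk P.1)]
  refine (IsLocalization.mk'_eq_of_eq' (b₁ := w P.1 * k P.1) (b₂ := kP * kP) ?_).trans
    (IsLocalization.mk'_cancel (w P.1) kP kP)
  rw [Submonoid.coe_mul, ← sq]
  exact (c.sum_mul_sq_eq_of_mul_mul_sub_eq_zero hcross P.1).symm

end RealSpectrum

open RealSpectrum in
/-- For a real ring `A`, the ring of abstract real regular functions on the whole real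
Zariski spectrum is isomorphic to `Σ_1⁻¹A`, via the canonical map sending
`a / (1 + ∑ x²)` to the function `p ↦ a / (1 + ∑ x²) ∈ A_p`. -/
theorem global_sections_isomorphism {A : Type*} [CommRing A] (hA : IsRealRing A) :
    ∃ ψ : Localization (sigma1 A) ≃+*
        regularFunctions (Set.univ : Set (RealSpectrum A)) isOpen_univ,
      ∀ (a : A) (σ : sigma1 A) (p : (Set.univ : Set (RealSpectrum A)))
        (hσ : (σ : A) ∉ (p : RealSpectrum A).asIdeal),
        (ψ (Localization.mk a σ)).1 p =
          IsLocalization.mk' (Localization.AtPrime (p : RealSpectrum A).asIdeal) a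
            (⟨(σ : A), hσ⟩ : (p : RealSpectrum A).asIdeal.primeCompl) :=
  ⟨RingEquiv.ofBijective toRegularFunctions
    ⟨toRegularFunctions_injective hA, toRegularFunctions_surjective hA⟩,
    toRegularFunctions_mk_apply⟩
end
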